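/- arXiv:2406.17867 — 3 statements merged into one kernel-verified Lean document; each statement's English description precedes it below -/
import Mathlib

section
/- The word 1001100110 is a factor of the infinite binary word q = g(p); consequently q contains a factor of exponent 5/2 and the critical exponent of q is at least 5/2. -/
/-- The finite block of length `n` occurring at position `i` in the infinite word `x`. -/
def FactorAt {A : Type*} (x : ℕ → A) (i n : ℕ) : List A :=
  (List.range n).map fun t => x (i + t)

/-- `w` is a (finite) factor of the infinite word `x`. -/
def IsFactor {A : Type*} (x : ℕ → A) (w : List A) : Prop :=
  ∃ i, w = FactorAt x i w.length

/-- Factor complexity of an infinite word: the number of distinct factors of length `n`. -/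
noncomputable def complexity {A : Type*} (x : ℕ → A) (n : ℕ) : ℕ :=
  Set.ncard {w : List A | w.length = n ∧ IsFactor x w}

/-- Factor complexity of a finite word: the number of distinct factors of length `n`. -/
noncomputable def complexityF {A : Type*} (z : List A) (n : ℕ) : ℕ :=
  Set.ncard {w : List A | w.length = n ∧ w <:+: z}

/-- `p` is a period of the finite word `y`:  `1 ≤ p ≤ |y|` and `y[j] = y[j+p]`
for all `0 ≤ j < |y| - p`. -/
def HasPeriod {A : Type*} [Inhabited A] (y : List A) (p : ℕ) : Prop :=
  1 ≤ p ∧ p ≤ y.length ∧ ∀ j, j + p < y.length → y.getD j default = y.getD (j + p) default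

/-- The smallest period of a finite word. -/
noncomputable def minPeriod {A : Type*} [Inhabited A] (y : List A) : ℕ :=
  sInf {p | HasPeriod y p}

/-- The exponent of a finite word: its length divided by its smallest period. -/
noncomputable def exponent {A : Type*} [Inhabited A] (y : List A) : ℚ :=
  (y.length : ℚ) / (minPeriod y : ℚ)

/-- The critical exponent of an infinite word: the supremum of the exponents of its
nonempty finite factors. -/
noncomputable def criticalExponent {A : Type*} [Inhabited A] (x : ℕ → A) : ENNReal :=
  sSup {e : ENNReal | ∃ w, IsFactor x w ∧ w ≠ [] ∧ e = ENNReal.ofReal ((exponent w : ℚ) : ℝ)}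

/-- The image of a finite word under a morphism given by its action on letters. -/
def mapWord {k : ℕ} {A : Type*} (σ : Fin k → List A) (w : List (Fin k)) : List A :=
  (w.map σ).flatten

/-- The image of an infinite word under a (nonerasing) morphism given by its action on
letters: the `n`-th letter of the concatenation `σ (x 0) ++ σ (x 1) ++ ⋯`. -/
def applyMorph {k : ℕ} {A : Type*} [Inhabited A] (σ : Fin k → List A) (x : ℕ → Fin k) :
    ℕ → A :=
  fun n => (((List.range (n + 1)).map fun i => σ (x i)).flatten).getD n default

/-- The morphism `h` with `h(0) = 01`, `h(1) = 21`, `h(2) = 0`. -/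
def hm : Fin 3 → List (Fin 3) := ![[0, 1], [2, 1], [0]]

/-- The morphism `g` with `g(0) = 011`, `g(1) = 0`, `g(2) = 01`. -/
def gm : Fin 3 → List (Fin 2) := ![[0, 1, 1], [0], [0, 1]]

/-- The abelian complexity of a binary infinite word at `n`: the number of distinct
values taken by the count of `0`'s among its length-`n` factors. -/
noncomputable def abelianComplexity (x : ℕ → Fin 2) (n : ℕ) : ℕ :=
  Set.ncard {z : ℕ | ∃ i, z = (FactorAt x i n).count 0}


section Aux

variable {k : ℕ} {A : Type*}

lemma flatten_prefix {B : Type*} {l₁ l₂ : List (List B)} (h : l₁ <+: l₂) :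
    l₁.flatten <+: l₂.flatten := by
  obtain ⟨t, rfl⟩ := h
  exact ⟨t.flatten, List.flatten_append.symm⟩

lemma getD_of_prefix {B : Type*} [Inhabited B] {l₁ l₂ : List B} {n : ℕ} (h : l₁ <+: l₂)
    (hn : n < l₁.length) : l₂.getD n default = l₁.getD n default := by
  obtain ⟨t, rfl⟩ := h
  exact List.getD_append _ _ _ _ hn

lemma length_le_mapWord (σ : Fin k → List A) (hne : ∀ a, σ a ≠ [])
    (w : List (Fin k)) : w.length ≤ (mapWord σ w).length := by
  induction w with
  | nil => simp [mapWord]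
  | cons a w ih =>
      simp only [mapWord, List.map_cons, List.flatten_cons, List.length_append,
        List.length_cons]
      have : 1 ≤ (σ a).length := List.length_pos_iff.mpr (hne a)
      simp only [mapWord] at ih
      omega

lemma mapWord_factorAt [Inhabited A] (σ : Fin k → List A) (x : ℕ → Fin k) (m : ℕ) :
    mapWord σ (FactorAt x 0 m) = ((List.range m).map fun i => σ (x i)).flatten := by
  simp [mapWord, FactorAt, List.map_map, Function.comp_def]

lemma range_map_prefix (f : ℕ → List A) {a b : ℕ} (h : a ≤ b) :
    ((List.range a).map f).flatten <+: ((List.range b).map f).flatten := by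
  apply flatten_prefix
  apply List.IsPrefix.map
  rw [← Nat.add_sub_cancel' h, List.range_add]
  exact List.prefix_append _ _

lemma applyMorph_getD [Inhabited A] (σ : Fin k → List A) (hne : ∀ a, σ a ≠ [])
    (x : ℕ → Fin k) (m n : ℕ) (h : n < (mapWord σ (FactorAt x 0 m)).length) :
    applyMorph σ x n = (mapWord σ (FactorAt x 0 m)).getD n default := by
  rw [mapWord_factorAt] at h ⊢
  show (((List.range (n + 1)).map fun i => σ (x i)).flatten).getD n default = _
  rcases le_total (n + 1) m with hc | hc
  · have hpre := range_map_prefix (fun i => σ (x i)) hc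
    have hlen : n < (((List.range (n + 1)).map fun i => σ (x i)).flatten).length := by
      have := length_le_mapWord σ hne (FactorAt x 0 (n + 1))
      rw [mapWord_factorAt] at this
      simp only [FactorAt, List.length_map, List.length_range] at this
      omega
    rw [getD_of_prefix hpre hlen]
  · have hpre := range_map_prefix (fun i => σ (x i)) hc
    rw [getD_of_prefix hpre h]

lemma factorAt_map [Inhabited (Fin k)] (σ : Fin k → List (Fin k)) (hne : ∀ a, σ a ≠ [])
    (x : ℕ → Fin k) (hfix : applyMorph σ x = x) (w : List (Fin k))
    (hw : FactorAt x 0 w.length = w) :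
    FactorAt x 0 (mapWord σ w).length = mapWord σ w := by
  apply List.ext_getElem
  · simp [FactorAt]
  · intro i h1 h2
    simp only [FactorAt, List.getElem_map, List.getElem_range, Nat.zero_add]
    have hi : i < (mapWord σ (FactorAt x 0 w.length)).length := by rw [hw]; simpa using h2
    have key := applyMorph_getD σ hne x w.length i hi
    rw [hw] at key
    rw [← congrFun hfix i, key, List.getD_eq_getElem _ _ (by simpa using h2)]

end Aux

lemma hm_ne : ∀ a, hm a ≠ [] := by decide
lemma gm_ne : ∀ a, gm a ≠ [] := by decide

/-- Concrete prefix of `p` of length 12. -/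
def pw4 : List (Fin 3) := mapWord hm (mapWord hm (mapWord hm (mapWord hm [0])))

/-- Concrete prefix of `q` of length 23. -/
def qw : List (Fin 2) := mapWord gm pw4

lemma minPeriod_w : minPeriod ([1, 0, 0, 1, 1, 0, 0, 1, 1, 0] : List (Fin 2)) = 4 := by
  have hper4 : HasPeriod ([1, 0, 0, 1, 1, 0, 0, 1, 1, 0] : List (Fin 2)) 4 := by
    refine ⟨by norm_num, by norm_num, ?_⟩
    intro j hj
    simp only [List.length_cons, List.length_nil] at hj
    have hj' : j < 6 := by omega
    interval_cases j <;> rfl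
  apply le_antisymm
  · exact Nat.sInf_le (by exact hper4)
  · apply le_csInf ⟨4, by exact hper4⟩
    intro m hmem
    by_contra hlt
    push_neg at hlt
    obtain ⟨hm1, hm2, hm3⟩ := hmem
    interval_cases m
    · exact absurd (hm3 0 (by norm_num)) (by decide)
    · exact absurd (hm3 1 (by norm_num)) (by decide)
    · exact absurd (hm3 1 (by norm_num)) (by decide)

lemma exponent_w : exponent ([1, 0, 0, 1, 1, 0, 0, 1, 1, 0] : List (Fin 2)) = 5 / 2 := by
  rw [exponent, minPeriod_w]
  norm_num


/-- The word `1001100110` is a factor of `q = g(p)`; consequently `q` has a factor of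
exponent `5/2` and its critical exponent is at least `5/2`. -/
theorem stmt5 (p : ℕ → Fin 3) (hp0 : p 0 = 0) (hpfix : applyMorph hm p = p) :
    IsFactor (applyMorph gm p) ([1, 0, 0, 1, 1, 0, 0, 1, 1, 0] : List (Fin 2)) ∧
    (∃ w : List (Fin 2), IsFactor (applyMorph gm p) w ∧ w ≠ [] ∧ exponent w = 5 / 2) ∧
    (5 : ENNReal) / 2 ≤ criticalExponent (applyMorph gm p) := by
  have h1 : FactorAt p 0 ([0] : List (Fin 3)).length = [0] := by
    rw [show FactorAt p 0 ([0] : List (Fin 3)).length = [p 0] from rfl, hp0]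
  have h2 := factorAt_map hm hm_ne p hpfix _ h1
  have h3 := factorAt_map hm hm_ne p hpfix _ h2
  have h4 := factorAt_map hm hm_ne p hpfix _ h3
  have h5 : FactorAt p 0 pw4.length = pw4 := factorAt_map hm hm_ne p hpfix _ h4
  have hq : ∀ n, n < qw.length → applyMorph gm p n = qw.getD n default := by
    intro n hn
    have h' : n < (mapWord gm (FactorAt p 0 pw4.length)).length := by
      rw [h5]; exact hn
    have := applyMorph_getD gm gm_ne p pw4.length n h'
    rwa [h5] at this
  have key : FactorAt (applyMorph gm p) 11 10 = ([1, 0, 0, 1, 1, 0, 0, 1, 1, 0] : List (Fin 2)) := by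
    have hlist : FactorAt (applyMorph gm p) 11 10 =
        [applyMorph gm p 11, applyMorph gm p 12, applyMorph gm p 13, applyMorph gm p 14,
         applyMorph gm p 15, applyMorph gm p 16, applyMorph gm p 17, applyMorph gm p 18,
         applyMorph gm p 19, applyMorph gm p 20] := by
      simp [FactorAt, List.range_succ]
    rw [hlist, hq 11 (by decide), hq 12 (by decide), hq 13 (by decide), hq 14 (by decide),
      hq 15 (by decide), hq 16 (by decide), hq 17 (by decide), hq 18 (by decide),
      hq 19 (by decide), hq 20 (by decide)]
    decide
  have hfac : IsFactor (applyMorph gm p) ([1, 0, 0, 1, 1, 0, 0, 1, 1, 0] : List (Fin 2)) :=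
    ⟨11, key.symm⟩
  refine ⟨hfac, ⟨_, hfac, by simp, exponent_w⟩, ?_⟩
  apply le_sSup
  refine ⟨_, hfac, by simp, ?_⟩
  rw [exponent_w]
  rw [show (((5 / 2 : ℚ) : ℝ)) = 5 / 2 by norm_num]
  rw [ENNReal.ofReal_div_of_pos (by norm_num)]
  norm_num
end

section
/- The infinite binary word q = g(p) contains no reversible factor of length greater than 15: if w is a factor of q with |w| > 15, then the reverse of w is not a factor of q. -/
def Cset : List (List (Fin 3)) :=
[[0,1,0,2,1,0,1,2,1,0,1,0,2,1,0,1],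
 [0,1,0,2,1,0,1,2,1,0,2,1,0,1,0,2],
 [0,1,0,2,1,0,1,2,1,0,2,1,0,1,2,1],
 [0,1,2,1,0,1,0,2,1,0,1,2,1,0,2,1],
 [0,1,2,1,0,2,1,0,1,0,2,1,0,1,2,1],
 [0,1,2,1,0,2,1,0,1,2,1,0,1,0,2,1],
 [0,2,1,0,1,0,2,1,0,1,2,1,0,1,0,2],
 [0,2,1,0,1,0,2,1,0,1,2,1,0,2,1,0],
 [0,2,1,0,1,2,1,0,1,0,2,1,0,1,2,1],
 [0,2,1,0,1,2,1,0,2,1,0,1,0,2,1,0],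
 [0,2,1,0,1,2,1,0,2,1,0,1,2,1,0,1],
 [1,0,1,0,2,1,0,1,2,1,0,1,0,2,1,0],
 [1,0,1,0,2,1,0,1,2,1,0,2,1,0,1,0],
 [1,0,1,0,2,1,0,1,2,1,0,2,1,0,1,2],
 [1,0,1,2,1,0,1,0,2,1,0,1,2,1,0,2],
 [1,0,1,2,1,0,2,1,0,1,0,2,1,0,1,2],
 [1,0,1,2,1,0,2,1,0,1,2,1,0,1,0,2],
 [1,0,2,1,0,1,0,2,1,0,1,2,1,0,1,0],
 [1,0,2,1,0,1,0,2,1,0,1,2,1,0,2,1],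
 [1,0,2,1,0,1,2,1,0,1,0,2,1,0,1,2],
 [1,0,2,1,0,1,2,1,0,2,1,0,1,0,2,1],
 [1,0,2,1,0,1,2,1,0,2,1,0,1,2,1,0],
 [1,2,1,0,1,0,2,1,0,1,2,1,0,2,1,0],
 [1,2,1,0,2,1,0,1,0,2,1,0,1,2,1,0],
 [1,2,1,0,2,1,0,1,2,1,0,1,0,2,1,0],
 [2,1,0,1,0,2,1,0,1,2,1,0,1,0,2,1],
 [2,1,0,1,0,2,1,0,1,2,1,0,2,1,0,1],
 [2,1,0,1,2,1,0,1,0,2,1,0,1,2,1,0],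
 [2,1,0,1,2,1,0,2,1,0,1,0,2,1,0,1],
 [2,1,0,1,2,1,0,2,1,0,1,2,1,0,1,0],
 [2,1,0,2,1,0,1,0,2,1,0,1,2,1,0,1],
 [2,1,0,2,1,0,1,0,2,1,0,1,2,1,0,2],
 [2,1,0,2,1,0,1,2,1,0,1,0,2,1,0,1]]

def Dset : List (List (Fin 2)) :=
[[0,0,1,0,0,1,1,0,0,1,1,0,1,0,0,1],
 [0,0,1,0,0,1,1,0,1,0,0,1,1,0,0,1],
 [0,0,1,1,0,0,1,0,0,1,1,0,0,1,1,0],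
 [0,0,1,1,0,0,1,0,0,1,1,0,1,0,0,1],
 [0,0,1,1,0,0,1,1,0,1,0,0,1,1,0,0],
 [0,0,1,1,0,1,0,0,1,1,0,0,1,0,0,1],
 [0,0,1,1,0,1,0,0,1,1,0,0,1,1,0,1],
 [0,1,0,0,1,1,0,0,1,0,0,1,1,0,0,1],
 [0,1,0,0,1,1,0,0,1,0,0,1,1,0,1,0],
 [0,1,0,0,1,1,0,0,1,1,0,1,0,0,1,1],
 [0,1,0,0,1,1,0,1,0,0,1,1,0,0,1,0],
 [0,1,0,0,1,1,0,1,0,0,1,1,0,0,1,1],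
 [0,1,1,0,0,1,0,0,1,1,0,0,1,1,0,1],
 [0,1,1,0,0,1,0,0,1,1,0,1,0,0,1,1],
 [0,1,1,0,0,1,1,0,1,0,0,1,1,0,0,1],
 [0,1,1,0,1,0,0,1,1,0,0,1,0,0,1,1],
 [0,1,1,0,1,0,0,1,1,0,0,1,1,0,1,0],
 [1,0,0,1,0,0,1,1,0,0,1,1,0,1,0,0],
 [1,0,0,1,0,0,1,1,0,1,0,0,1,1,0,0],
 [1,0,0,1,1,0,0,1,0,0,1,1,0,0,1,1],
 [1,0,0,1,1,0,0,1,0,0,1,1,0,1,0,0],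
 [1,0,0,1,1,0,0,1,1,0,1,0,0,1,1,0],
 [1,0,0,1,1,0,1,0,0,1,1,0,0,1,0,0],
 [1,0,0,1,1,0,1,0,0,1,1,0,0,1,1,0],
 [1,0,1,0,0,1,1,0,0,1,0,0,1,1,0,0],
 [1,0,1,0,0,1,1,0,0,1,0,0,1,1,0,1],
 [1,0,1,0,0,1,1,0,0,1,1,0,1,0,0,1],
 [1,1,0,0,1,0,0,1,1,0,0,1,1,0,1,0],
 [1,1,0,0,1,0,0,1,1,0,1,0,0,1,1,0],
 [1,1,0,0,1,1,0,1,0,0,1,1,0,0,1,0],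
 [1,1,0,1,0,0,1,1,0,0,1,0,0,1,1,0],
 [1,1,0,1,0,0,1,1,0,0,1,1,0,1,0,0]]

set_option linter.unusedSectionVars false
section Aux

variable {k : ℕ} {A : Type*} [Inhabited A]

/-- Flattened image of the first `N` letters. -/
def FFn (σ : Fin k → List A) (x : ℕ → Fin k) (N : ℕ) : List A :=
  ((List.range N).map fun i => σ (x i)).flatten

lemma FFn_add (σ : Fin k → List A) (x : ℕ → Fin k) (N t : ℕ) :
    FFn σ x (N + t) = FFn σ x N ++ ((List.range t).map fun s => σ (x (N + s))).flatten := by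
  unfold FFn
  rw [List.range_add, List.map_append, List.flatten_append, List.map_map]
  rfl

lemma FFn_prefix (σ : Fin k → List A) (x : ℕ → Fin k) {N N' : ℕ} (h : N ≤ N') :
    FFn σ x N <+: FFn σ x N' := by
  obtain ⟨t, rfl⟩ := Nat.exists_eq_add_of_le h
  rw [FFn_add]
  exact List.prefix_append _ _

lemma le_length_flatten (L : List (List A)) (h : ∀ l ∈ L, l ≠ []) :
    L.length ≤ L.flatten.length := by
  induction L with
  | nil => simp
  | cons a L ih =>
    simp only [List.flatten_cons, List.length_cons, List.length_append]
    have h1 : 1 ≤ a.length := List.length_pos_iff.mpr (h a (by simp))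
    have h2 := ih (fun l hl => h l (by simp [hl]))
    omega

lemma length_FFn_add (σ : Fin k → List A) (x : ℕ → Fin k) (hσ : ∀ a, σ a ≠ []) (N t : ℕ) :
    (FFn σ x N).length + t ≤ (FFn σ x (N + t)).length := by
  rw [FFn_add, List.length_append]
  have : t ≤ (((List.range t).map fun s => σ (x (N + s))).flatten).length := by
    have := le_length_flatten (A := A) ((List.range t).map fun s => σ (x (N + s)))
      (by intro l hl; simp only [List.mem_map] at hl; obtain ⟨s, _, rfl⟩ := hl; exact hσ _)
    simpa using this
  omega

lemma length_FFn (σ : Fin k → List A) (x : ℕ → Fin k) (hσ : ∀ a, σ a ≠ []) (N : ℕ) :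
    N ≤ (FFn σ x N).length := by
  have := length_FFn_add σ x hσ 0 N
  simpa [FFn] using this

lemma getD_of_prefix_s12 {l L : List A} (h : l <+: L) {m : ℕ} (hm : m < l.length) :
    L.getD m default = l.getD m default := by
  obtain ⟨t, rfl⟩ := h
  exact List.getD_append l t default m hm

lemma applyMorph_eq_getD (σ : Fin k → List A) (x : ℕ → Fin k) (hσ : ∀ a, σ a ≠ [])
    (m N : ℕ) (h : m < (FFn σ x N).length) :
    applyMorph σ x m = (FFn σ x N).getD m default := by
  have h0 : applyMorph σ x m = (FFn σ x (m + 1)).getD m default := rfl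
  have hm1 : m < (FFn σ x (m + 1)).length :=
    lt_of_lt_of_le (Nat.lt_succ_self m) (length_FFn σ x hσ (m + 1))
  rcases le_total N (m + 1) with hle | hle
  · rw [h0, getD_of_prefix_s12 (FFn_prefix σ x hle) h]
  · rw [h0, ← getD_of_prefix_s12 (FFn_prefix σ x hle) hm1]

lemma mapWord_factor (σ : Fin k → List A) (x : ℕ → Fin k) (j n : ℕ) :
    FFn σ x (j + n) = FFn σ x j ++ mapWord σ (FactorAt x j n) := by
  rw [FFn_add]
  congr 1
  simp [mapWord, FactorAt, List.map_map]
  rfl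

lemma length_FactorAt (x : ℕ → A) (i n : ℕ) : (FactorAt x i n).length = n := by
  simp [FactorAt]

lemma desub (σ : Fin k → List A) (x : ℕ → Fin k) (hσ : ∀ a, σ a ≠ []) (i n : ℕ)
    (hn : 1 ≤ n) :
    ∃ j, (FFn σ x j).length ≤ i ∧ i < (FFn σ x (j + 1)).length ∧
      FactorAt (applyMorph σ x) i n <:+: mapWord σ (FactorAt x j n) := by
  classical
  have hex : ∃ j, i < (FFn σ x (j + 1)).length :=
    ⟨i, lt_of_lt_of_le (Nat.lt_succ_self i) (length_FFn σ x hσ (i + 1))⟩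
  set j := Nat.find hex with hjdef
  have hj2 : i < (FFn σ x (j + 1)).length := Nat.find_spec hex
  have hj1 : (FFn σ x j).length ≤ i := by
    rcases Nat.eq_zero_or_pos j with h0 | hpos
    · rw [h0]; simp [FFn]
    · have := Nat.find_min hex (m := j - 1) (by omega)
      have hj' : j - 1 + 1 = j := by omega
      rw [hj'] at this
      omega
  refine ⟨j, hj1, hj2, ?_⟩
  have hbound : i + n ≤ (FFn σ x (j + n)).length := by
    have h1 := length_FFn_add σ x hσ (j + 1) (n - 1)
    have he : j + 1 + (n - 1) = j + n := by omega
    rw [he] at h1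
    omega
  have heq : FactorAt (applyMorph σ x) i n = ((FFn σ x (j + n)).drop i).take n := by
    apply List.ext_getElem
    · rw [length_FactorAt]
      simp only [List.length_take, List.length_drop]
      omega
    · intro t h1 h2
      rw [length_FactorAt] at h1
      have htl : i + t < (FFn σ x (j + n)).length := by omega
      have hL : (FactorAt (applyMorph σ x) i n)[t] = applyMorph σ x (i + t) := by
        simp [FactorAt]
      rw [hL, applyMorph_eq_getD σ x hσ (i + t) (j + n) htl,
        List.getD_eq_getElem _ _ htl, List.getElem_take, List.getElem_drop]
  rw [heq, mapWord_factor σ x j n]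
  obtain ⟨d, hd⟩ := Nat.exists_eq_add_of_le hj1
  rw [hd, List.drop_length_add_append]
  exact ((List.take_prefix _ _).isInfix).trans ((List.drop_suffix _ _).isInfix)

lemma infix_eq_drop_take {v z : List A} (h : v <:+: z) :
    ∃ a, a + v.length ≤ z.length ∧ v = (z.drop a).take v.length := by
  obtain ⟨s, t, rfl⟩ := h
  refine ⟨s.length, by simp, ?_⟩
  rw [List.append_assoc, List.drop_left, List.take_left]

lemma take_FactorAt (x : ℕ → A) (i n m : ℕ) (h : m ≤ n) :
    (FactorAt x i n).take m = FactorAt x i m := by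
  simp only [FactorAt, ← List.map_take, List.take_range, inf_eq_left.mpr h]

lemma drop_FactorAt (x : ℕ → A) (i n d : ℕ) :
    (FactorAt x i n).drop d = FactorAt x (i + d) (n - d) := by
  apply List.ext_getElem
  · simp [FactorAt]
  · intro t h1 h2
    simp only [FactorAt, ← List.map_drop]
    simp only [List.getElem_map, List.getElem_drop, List.getElem_range]
    congr 1
    omega

end Aux


/-- The word `q = g(p)` contains no reversible factor of length greater than `15`:
if `w` is a factor of `q` with `|w| > 15`, then the reverse of `w` is not a factor. -/
theorem stmt12 (p : ℕ → Fin 3) (hp0 : p 0 = 0) (hpfix : applyMorph hm p = p) :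
    ∀ w : List (Fin 2), IsFactor (applyMorph gm p) w → w.length > 15 →
      ¬ IsFactor (applyMorph gm p) w.reverse := by
  have hm0 : hm 0 = [0, 1] := rfl
  have hm1 : hm 1 = [2, 1] := rfl
  have hm2 : hm 2 = [0] := rfl
  have hmne : ∀ a : Fin 3, hm a ≠ [] := by decide
  have hgne : ∀ a : Fin 3, gm a ≠ [] := by decide
  have h1 : p 1 = 1 := by
    have e := (congrFun hpfix 1).symm
    rw [applyMorph_eq_getD hm p hmne 1 1 (by simp [FFn, List.range_succ, hp0, hm0, hm1, hm2])] at e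
    rw [e]
    simp [FFn, List.range_succ, hp0, hm0, hm1, hm2]
  have h2 : p 2 = 2 := by
    have e := (congrFun hpfix 2).symm
    rw [applyMorph_eq_getD hm p hmne 2 2 (by simp [FFn, List.range_succ, hp0, h1, hm0, hm1, hm2])] at e
    rw [e]
    simp [FFn, List.range_succ, hp0, h1, hm0, hm1, hm2]
  have h3 : p 3 = 1 := by
    have e := (congrFun hpfix 3).symm
    rw [applyMorph_eq_getD hm p hmne 3 3 (by simp [FFn, List.range_succ, hp0, h1, h2, hm0, hm1, hm2])] at e
    rw [e]
    simp [FFn, List.range_succ, hp0, h1, h2, hm0, hm1, hm2]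
  have h4 : p 4 = 0 := by
    have e := (congrFun hpfix 4).symm
    rw [applyMorph_eq_getD hm p hmne 4 4 (by simp [FFn, List.range_succ, hp0, h1, h2, h3, hm0, hm1, hm2])] at e
    rw [e]
    simp [FFn, List.range_succ, hp0, h1, h2, h3, hm0, hm1, hm2]
  have h5 : p 5 = 2 := by
    have e := (congrFun hpfix 5).symm
    rw [applyMorph_eq_getD hm p hmne 5 5 (by simp [FFn, List.range_succ, hp0, h1, h2, h3, h4, hm0, hm1, hm2])] at e
    rw [e]
    simp [FFn, List.range_succ, hp0, h1, h2, h3, h4, hm0, hm1, hm2]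
  have h6 : p 6 = 1 := by
    have e := (congrFun hpfix 6).symm
    rw [applyMorph_eq_getD hm p hmne 6 6 (by simp [FFn, List.range_succ, hp0, h1, h2, h3, h4, h5, hm0, hm1, hm2])] at e
    rw [e]
    simp [FFn, List.range_succ, hp0, h1, h2, h3, h4, h5, hm0, hm1, hm2]
  have h7 : p 7 = 0 := by
    have e := (congrFun hpfix 7).symm
    rw [applyMorph_eq_getD hm p hmne 7 7 (by simp [FFn, List.range_succ, hp0, h1, h2, h3, h4, h5, h6, hm0, hm1, hm2])] at e
    rw [e]
    simp [FFn, List.range_succ, hp0, h1, h2, h3, h4, h5, h6, hm0, hm1, hm2]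
  have h8 : p 8 = 1 := by
    have e := (congrFun hpfix 8).symm
    rw [applyMorph_eq_getD hm p hmne 8 8 (by simp [FFn, List.range_succ, hp0, h1, h2, h3, h4, h5, h6, h7, hm0, hm1, hm2])] at e
    rw [e]
    simp [FFn, List.range_succ, hp0, h1, h2, h3, h4, h5, h6, h7, hm0, hm1, hm2]
  have h9 : p 9 = 0 := by
    have e := (congrFun hpfix 9).symm
    rw [applyMorph_eq_getD hm p hmne 9 9 (by simp [FFn, List.range_succ, hp0, h1, h2, h3, h4, h5, h6, h7, h8, hm0, hm1, hm2])] at e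
    rw [e]
    simp [FFn, List.range_succ, hp0, h1, h2, h3, h4, h5, h6, h7, h8, hm0, hm1, hm2]
  have h10 : p 10 = 2 := by
    have e := (congrFun hpfix 10).symm
    rw [applyMorph_eq_getD hm p hmne 10 10 (by simp [FFn, List.range_succ, hp0, h1, h2, h3, h4, h5, h6, h7, h8, h9, hm0, hm1, hm2])] at e
    rw [e]
    simp [FFn, List.range_succ, hp0, h1, h2, h3, h4, h5, h6, h7, h8, h9, hm0, hm1, hm2]
  have h11 : p 11 = 1 := by
    have e := (congrFun hpfix 11).symm
    rw [applyMorph_eq_getD hm p hmne 11 11 (by simp [FFn, List.range_succ, hp0, h1, h2, h3, h4, h5, h6, h7, h8, h9, h10, hm0, hm1, hm2])] at e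
    rw [e]
    simp [FFn, List.range_succ, hp0, h1, h2, h3, h4, h5, h6, h7, h8, h9, h10, hm0, hm1, hm2]
  have h12 : p 12 = 0 := by
    have e := (congrFun hpfix 12).symm
    rw [applyMorph_eq_getD hm p hmne 12 12 (by simp [FFn, List.range_succ, hp0, h1, h2, h3, h4, h5, h6, h7, h8, h9, h10, h11, hm0, hm1, hm2])] at e
    rw [e]
    simp [FFn, List.range_succ, hp0, h1, h2, h3, h4, h5, h6, h7, h8, h9, h10, h11, hm0, hm1, hm2]
  have h13 : p 13 = 1 := by
    have e := (congrFun hpfix 13).symm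
    rw [applyMorph_eq_getD hm p hmne 13 13 (by simp [FFn, List.range_succ, hp0, h1, h2, h3, h4, h5, h6, h7, h8, h9, h10, h11, h12, hm0, hm1, hm2])] at e
    rw [e]
    simp [FFn, List.range_succ, hp0, h1, h2, h3, h4, h5, h6, h7, h8, h9, h10, h11, h12, hm0, hm1, hm2]
  have h14 : p 14 = 2 := by
    have e := (congrFun hpfix 14).symm
    rw [applyMorph_eq_getD hm p hmne 14 14 (by simp [FFn, List.range_succ, hp0, h1, h2, h3, h4, h5, h6, h7, h8, h9, h10, h11, h12, h13, hm0, hm1, hm2])] at e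
    rw [e]
    simp [FFn, List.range_succ, hp0, h1, h2, h3, h4, h5, h6, h7, h8, h9, h10, h11, h12, h13, hm0, hm1, hm2]
  have h15 : p 15 = 1 := by
    have e := (congrFun hpfix 15).symm
    rw [applyMorph_eq_getD hm p hmne 15 15 (by simp [FFn, List.range_succ, hp0, h1, h2, h3, h4, h5, h6, h7, h8, h9, h10, h11, h12, h13, h14, hm0, hm1, hm2])] at e
    rw [e]
    simp [FFn, List.range_succ, hp0, h1, h2, h3, h4, h5, h6, h7, h8, h9, h10, h11, h12, h13, h14, hm0, hm1, hm2]
  -- decidable checks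
  have hlenC : ∀ w ∈ Cset, w.length = 16 := by decide
  have hlenhm : ∀ w ∈ Cset, (mapWord hm w).length ≤ 32 := by decide
  have hlengm : ∀ w ∈ Cset, (mapWord gm w).length ≤ 48 := by decide
  have hc1 : ∀ w ∈ Cset, ∀ a ∈ List.range 32,
      (((mapWord hm w).drop a).take 16).length = 16 →
      ((mapWord hm w).drop a).take 16 ∈ Cset := by decide
  have hc2 : ∀ w ∈ Cset, ∀ a ∈ List.range 33,
      (((mapWord gm w).drop a).take 16).length = 16 →
      ((mapWord gm w).drop a).take 16 ∈ Dset := by decide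
  have hrev : ∀ v ∈ Dset, v.reverse ∉ Dset := by decide
  -- prefix of p
  have hbase : FactorAt p 0 16 = [0, 1, 2, 1, 0, 2, 1, 0, 1, 0, 2, 1, 0, 1, 2, 1] := by
    have : List.range 16 = [0,1,2,3,4,5,6,7,8,9,10,11,12,13,14,15] := rfl
    simp only [FactorAt, this, List.map_cons, List.map_nil, Nat.zero_add]
    rw [hp0, h1, h2, h3, h4, h5, h6, h7, h8, h9, h10, h11, h12, h13, h14, h15]
  -- every length-16 factor of p is in Cset
  have factorP : ∀ i, FactorAt p i 16 ∈ Cset := by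
    intro i
    induction i using Nat.strong_induction_on with
    | _ i IH =>
      obtain ⟨j, hj1, hj2, hinf⟩ := desub hm p hmne i 16 (by norm_num)
      rw [hpfix] at hinf
      rcases Nat.eq_zero_or_pos i with rfl | hipos
      · rw [hbase]; decide
      · have hji : j < i := by
          rcases Nat.eq_zero_or_pos j with rfl | hjpos
          · omega
          · have h1' := length_FFn_add hm p hmne 1 (j - 1)
            have he : 1 + (j - 1) = j := by omega
            rw [he] at h1'
            have hF1 : (FFn hm p 1).length = 2 := by
              simp [FFn, List.range_succ, hp0, hm0]
            omega
        have hmem := IH j hji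
        obtain ⟨a, ha, hv⟩ := infix_eq_drop_take hinf
        rw [length_FactorAt] at ha hv
        have hzlen := hlenhm _ hmem
        rw [hv]
        exact hc1 _ hmem a (List.mem_range.mpr (by omega))
          (by rw [← hv]; exact length_FactorAt p i 16)
  -- every length-16 factor of q is in Dset
  have factorQ : ∀ i, FactorAt (applyMorph gm p) i 16 ∈ Dset := by
    intro i
    obtain ⟨j, _, _, hinf⟩ := desub gm p hgne i 16 (by norm_num)
    have hmem := factorP j
    obtain ⟨a, ha, hv⟩ := infix_eq_drop_take hinf
    rw [length_FactorAt] at ha hv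
    have hzlen := hlengm _ hmem
    rw [hv]
    exact hc2 _ hmem a (List.mem_range.mpr (by omega))
      (by rw [← hv]; exact length_FactorAt (applyMorph gm p) i 16)
  -- conclusion
  intro w hw hlen hrw
  obtain ⟨i, hwi⟩ := hw
  obtain ⟨i', hri⟩ := hrw
  rw [List.length_reverse] at hri
  have hu : w.take 16 = FactorAt (applyMorph gm p) i 16 := by
    conv_lhs => rw [hwi]
    rw [take_FactorAt _ _ _ _ (by omega)]
  have hu2 : (w.take 16).reverse = FactorAt (applyMorph gm p) (i' + (w.length - 16)) 16 := by
    rw [List.reverse_take]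
    conv_lhs => rw [hri]
    rw [drop_FactorAt]
    congr 1
    omega
  have m1 : w.take 16 ∈ Dset := by rw [hu]; exact factorQ i
  have m2 : (w.take 16).reverse ∈ Dset := by rw [hu2]; exact factorQ _
  exact hrev _ m1 m2
end

section
/- The binary word W = 00110011010011001001101001100100110010 of length 38 satisfies ρ_W(i) ≤ 2i for all 1 ≤ i ≤ 38, and every nonempty factor of W has exponent strictly less than 5/2; hence the bound 38 in the statement 'every finite Rote word of length > 38 has a factor of exponent ≥ 5/2' is sharp. -/
/-- The word of the theorem. -/
private def ZW : List (Fin 2) :=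
  [0, 0, 1, 1, 0, 0, 1, 1, 0, 1, 0, 0, 1, 1, 0, 0, 1, 0, 0, 1, 1, 0, 1, 0, 0, 1, 1, 0, 0, 1, 0, 0, 1, 1, 0, 0, 1, 0]

private lemma complexityF_eq (z : List (Fin 2)) (n : ℕ) :
    complexityF z n =
      (((z.tails.flatMap List.inits).filter (fun w => w.length = n)).dedup).length := by
  have hset : {w : List (Fin 2) | w.length = n ∧ w <:+: z} =
      ↑(((z.tails.flatMap List.inits).filter (fun w => w.length = n)).toFinset) := by
    ext w
    simp only [Set.mem_setOf_eq, Finset.coe_sort_coe, List.coe_toFinset, Set.mem_setOf_eq,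
      List.mem_filter, List.mem_flatMap, List.mem_tails, List.mem_inits,
      List.infix_iff_prefix_suffix, decide_eq_true_eq]
    tauto
  rw [complexityF, hset, Set.ncard_coe_finset, List.card_toFinset]

set_option maxRecDepth 100000 in
private lemma part1 : ∀ i ∈ Finset.Icc 1 38,
    (((ZW.tails.flatMap List.inits).filter (fun w => w.length = i)).dedup).length ≤ 2 * i := by
  decide

set_option maxRecDepth 100000 in
private lemma key : ∀ p ∈ Finset.Icc 1 15, ∀ i ∈ Finset.range 38,
    i + (5 * p + 1) / 2 ≤ 38 →
    ∃ j ∈ Finset.range ((5 * p + 1) / 2 - p),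
      ZW.getD (i + j) 0 ≠ ZW.getD (i + j + p) 0 := by
  decide

/-- The binary word `W = 00110011010011001001101001100100110010` of length `38` is Rote
and every nonempty factor of it has exponent strictly less than `5/2`; hence the bound
`38` is sharp. -/
theorem stmt13 :
    (∀ i, 1 ≤ i → i ≤ 38 →
      complexityF ([0, 0, 1, 1, 0, 0, 1, 1, 0, 1, 0, 0, 1, 1, 0, 0, 1, 0, 0, 1, 1, 0, 1, 0, 0, 1, 1, 0, 0, 1, 0, 0, 1, 1, 0, 0, 1, 0] : List (Fin 2)) i ≤ 2 * i) ∧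
    (∀ w : List (Fin 2), w <:+: ([0, 0, 1, 1, 0, 0, 1, 1, 0, 1, 0, 0, 1, 1, 0, 0, 1, 0, 0, 1, 1, 0, 1, 0, 0, 1, 1, 0, 0, 1, 0, 0, 1, 1, 0, 0, 1, 0] : List (Fin 2)) → w ≠ [] →
      exponent w < 5 / 2) := by
  constructor
  · intro i h1 h38
    show complexityF ZW i ≤ 2 * i
    rw [complexityF_eq]
    exact part1 i (Finset.mem_Icc.2 ⟨h1, h38⟩)
  · intro w hwz hne
    replace hwz : w <:+: ZW := hwz
    have hZ : ZW.length = 38 := rfl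
    obtain ⟨s, t, hst⟩ := hwz
    set i := s.length with hi
    have hdrop : ZW.drop i = w ++ t := by
      rw [← hst, List.append_assoc, hi, List.drop_left]
    have hilen : i + w.length ≤ 38 := by
      have := congrArg List.length hst
      simp only [List.length_append, hZ] at this
      omega
    have hEmb : ∀ j, j < w.length → w.getD j 0 = ZW.getD (i + j) 0 := by
      intro j hj
      have h2 : j < (ZW.drop i).length := by
        rw [hdrop, List.length_append]; omega
      have h3 : i + j < ZW.length := by
        rw [List.length_drop] at h2; omega
      rw [List.getD_eq_getElem _ _ hj, List.getD_eq_getElem _ _ h3]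
      have hpre : w <+: ZW.drop i := by rw [hdrop]; exact List.prefix_append _ _
      rw [hpre.getElem hj, List.getElem_drop]
    have hwpos : 1 ≤ w.length := List.length_pos_iff.2 hne
    have hmem : w.length ∈ {p | HasPeriod w p} :=
      ⟨hwpos, le_refl _, fun j hj => absurd hj (by omega)⟩
    have hsp : HasPeriod w (minPeriod w) := Nat.sInf_mem ⟨_, hmem⟩
    obtain ⟨hp1, hp2, hp3⟩ := hsp
    set p := minPeriod w with hpdef
    have hmain : 2 * w.length < 5 * p := by
      by_contra hcon
      push_neg at hcon
      have hp15 : p ≤ 15 := by omega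
      obtain ⟨j, hjm, hjne⟩ := key p (Finset.mem_Icc.2 ⟨hp1, hp15⟩) i
        (Finset.mem_range.2 (by omega)) (by omega)
      rw [Finset.mem_range] at hjm
      have hjp : j + p < w.length := by omega
      apply hjne
      have e1 := hEmb j (by omega)
      have e2 := hEmb (j + p) hjp
      have e3 := hp3 j hjp
      rw [show (default : Fin 2) = 0 from rfl] at e3
      rw [← add_assoc] at e2
      rw [← e1, ← e2]
      exact e3
    show (w.length : ℚ) / (p : ℚ) < 5 / 2
    have hp0 : (0 : ℚ) < p := by exact_mod_cast hp1
    rw [div_lt_div_iff₀ hp0 (by norm_num)]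
    have h5 : (2 * w.length : ℚ) < 5 * p := by exact_mod_cast hmain
    linarith
end
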